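/- Let $X$ be a centred Gaussian random element in a separable Banach space $\mathbb{B}$ with Karhunen–Loève expansion $X = \sum_{i=1}^\infty \xi_i x_i$ (convergence almost surely in norm, where $\xi_i$ are i.i.d. standard normal and $x_i \in \mathbb{B}$), and let $K \subseteq \mathbb{B}$ be a closed, convex, symmetric set. Then $\Pr(X \in K) = \lim_{n\to\infty} \Pr\big(\sum_{i=1}^n \xi_i x_i \in K\big)$. -/

import Mathlib

/-!
The law of each partial sum `Sₙ = ∑_{i<n} ξᵢ xᵢ` is symmetric and midpoint log-concave,
`ν A * ν B ≤ ν ((A + B) / 2) ^ 2`: the standard Gaussian satisfies the Prékopa–Leindler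
inequality (the one-dimensional one, from Brunn–Minkowski on the line, transferred through the
log-concave density), and Prékopa–Leindler in one factor tensorizes with log-concavity in the
other. For such `ν` and symmetric convex `K`, the sets `K - v` and `K + v` have equal mass and
their midpoints lie in `K`, so `ν (K - v) ≤ ν K` (Anderson's inequality). Integrating over the
last coefficient `ξₙ`, `P(Sₙ₊₁ ∈ K) ≤ P(Sₙ ∈ K)`.

Applied to the closed thickenings of `K`, which are again symmetric and convex, this
monotonicity and the almost sure convergence give `P(X ∈ K) ≤ P(Sₙ ∈ K)` for every `n`, while
closedness of `K` gives `limsup P(Sₙ ∈ K) ≤ P(X ∈ K)`.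
-/

open MeasureTheory ProbabilityTheory Filter Set
open scoped ENNReal NNReal Topology

lemma Real.midpoint_eq_add_div_two (a b : ℝ) : midpoint ℝ a b = (a + b) / 2 := by
  rw [midpoint_eq_smul_add, invOf_eq_inv, smul_eq_mul]; ring

theorem IsCompact.volume_add_le_of_midpoint_mem {K₁ K₂ S : Set ℝ} (h₁ : IsCompact K₁)
    (h₂ : IsCompact K₂) (hne₁ : K₁.Nonempty) (hne₂ : K₂.Nonempty)
    (hS : ∀ a ∈ K₁, ∀ b ∈ K₂, midpoint ℝ a b ∈ S) :
    2⁻¹ * volume K₁ + 2⁻¹ * volume K₂ ≤ volume S := by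
  set a := sSup K₁
  set b := sInf K₂
  have ha : a ∈ K₁ := h₁.sSup_mem hne₁
  have hb : b ∈ K₂ := h₂.sInf_mem hne₂
  -- `(K₁ + b) / 2` and `(a + K₂) / 2` are half-size copies inside `S` meeting in at most a point
  set U := AffineMap.homothety b (⅟2 : ℝ) '' K₁
  set V := AffineMap.homothety a (⅟2 : ℝ) '' K₂
  have hU : U ⊆ Iic (midpoint ℝ a b) := by
    rintro _ ⟨y, hy, rfl⟩
    have := le_csSup h₁.bddAbove hy
    simp only [homothety_invOf_two, mem_Iic, Real.midpoint_eq_add_div_two]; linarith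
  have hV : V ⊆ Ici (midpoint ℝ a b) := by
    rintro _ ⟨z, hz, rfl⟩
    have := csInf_le h₂.bddBelow hz
    simp only [homothety_invOf_two, mem_Ici, Real.midpoint_eq_add_div_two]; linarith
  have hUV : AEDisjoint volume U V :=
    measure_mono_null (fun y hy => le_antisymm (hU hy.1) (hV hy.2)) (measure_singleton _)
  have hVm : MeasurableSet V :=
    (h₂.image (AffineMap.homothety_continuous _ _)).measurableSet
  have hUVS : U ∪ V ⊆ S := by
    rintro _ (⟨y, hy, rfl⟩ | ⟨z, hz, rfl⟩) <;> rw [homothety_invOf_two]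
    · rw [midpoint_comm]; exact hS y hy b hb
    · exact hS a ha z hz
  have hhalf : ∀ c (K : Set ℝ), volume (AffineMap.homothety c (⅟2 : ℝ) '' K) = 2⁻¹ * volume K :=
    fun c K => by
      rw [Measure.addHaar_image_homothety, Module.finrank_self, pow_one, invOf_eq_inv,
        abs_of_pos (by norm_num), ENNReal.ofReal_inv_of_pos two_pos, ENNReal.ofReal_ofNat]
  calc 2⁻¹ * volume K₁ + 2⁻¹ * volume K₂ = volume (U ∪ V) := by
        rw [measure_union₀ hVm.nullMeasurableSet hUV, hhalf, hhalf]
    _ ≤ volume S := measure_mono hUVS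

theorem MeasurableSet.volume_add_le_of_midpoint_mem {A B S : Set ℝ} (hA : MeasurableSet A)
    (hB : MeasurableSet B) (hneA : A.Nonempty) (hneB : B.Nonempty)
    (hS : ∀ a ∈ A, ∀ b ∈ B, midpoint ℝ a b ∈ S) :
    2⁻¹ * volume A + 2⁻¹ * volume B ≤ volume S := by
  obtain ⟨a₀, ha₀⟩ := hneA
  obtain ⟨b₀, hb₀⟩ := hneB
  rw [hA.measure_eq_iSup_isCompact, hB.measure_eq_iSup_isCompact]
  simp only [ENNReal.mul_iSup, iSup_and']
  refine ENNReal.biSup_add_biSup_le' ⟨∅, empty_subset _, isCompact_empty⟩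
    ⟨∅, empty_subset _, isCompact_empty⟩ fun K₁ ⟨hK₁A, hK₁⟩ K₂ ⟨hK₂B, hK₂⟩ => ?_
  -- adjoining a point makes the compact sets nonempty without leaving `A` and `B`
  calc 2⁻¹ * volume K₁ + 2⁻¹ * volume K₂
      ≤ 2⁻¹ * volume (insert a₀ K₁) + 2⁻¹ * volume (insert b₀ K₂) := by
        gcongr <;> exact subset_insert _ _
    _ ≤ volume S :=
        (hK₁.insert a₀).volume_add_le_of_midpoint_mem (hK₂.insert b₀) (insert_nonempty _ _)
          (insert_nonempty _ _) fun a ha b hb =>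
            hS a (insert_subset ha₀ hK₁A ha) b (insert_subset hb₀ hK₂B hb)

theorem add_lintegral_le_lintegral_of_midpoint {f g h : ℝ → ℝ} (hf : Measurable f)
    (hg : Measurable g) (hh : Measurable h) (hf0 : 0 ≤ f) (hg0 : 0 ≤ g) (hh0 : 0 ≤ h)
    (hf1 : ∀ a, f a ≤ 1) (hg1 : ∀ b, g b ≤ 1)
    (hf_sup : ∀ t < 1, ∃ a, t < f a) (hg_sup : ∀ t < 1, ∃ b, t < g b)
    (hfgh : ∀ a b, f a * g b ≤ h (midpoint ℝ a b) ^ 2) :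
    2⁻¹ * (∫⁻ a, ENNReal.ofReal (f a)) + 2⁻¹ * ∫⁻ b, ENNReal.ofReal (g b) ≤
      ∫⁻ c, ENNReal.ofReal (h c) := by
  have level : ∀ t ∈ Ioi (0 : ℝ),
      2⁻¹ * volume {a | t < f a} + 2⁻¹ * volume {b | t < g b} ≤ volume {c | t < h c} := by
    intro t (ht : 0 < t)
    rcases lt_or_ge t 1 with ht1 | ht1
    · refine (measurableSet_lt measurable_const hf).volume_add_le_of_midpoint_mem
        (measurableSet_lt measurable_const hg) (hf_sup t ht1) (hg_sup t ht1) fun a ha b hb => ?_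
      have : t ^ 2 < h (midpoint ℝ a b) ^ 2 :=
        calc t ^ 2 = t * t := sq t
          _ < f a * g b := mul_lt_mul'' ha hb ht.le ht.le
          _ ≤ _ := hfgh a b
      exact (pow_lt_pow_iff_left₀ ht.le (hh0 _) two_ne_zero).1 this
    · have hf' : {a | t < f a} = ∅ :=
        eq_empty_of_forall_notMem fun a ha => (hf1 a).not_gt (ht1.trans_lt ha)
      have hg' : {b | t < g b} = ∅ :=
        eq_empty_of_forall_notMem fun b hb => (hg1 b).not_gt (ht1.trans_lt hb)
      simp [hf', hg']
  have hφ : ∀ q : ℝ → ℝ, Measurable fun t : ℝ => volume {a | t < q a} :=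
    fun q => Antitone.measurable fun _ _ hst => measure_mono fun _ ha => hst.trans_lt ha
  rw [lintegral_eq_lintegral_meas_lt volume (ae_of_all _ hf0) hf.aemeasurable,
    lintegral_eq_lintegral_meas_lt volume (ae_of_all _ hg0) hg.aemeasurable,
    lintegral_eq_lintegral_meas_lt volume (ae_of_all _ hh0) hh.aemeasurable,
    ← lintegral_const_mul _ (hφ f),
    ← lintegral_const_mul _ (hφ g),
    ← lintegral_add_left ((hφ f).const_mul _)]
  exact setLIntegral_mono (hφ h) level

lemma ENNReal.mul_le_sq_half_add (x y : ℝ≥0∞) : x * y ≤ (2⁻¹ * x + 2⁻¹ * y) ^ 2 := by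
  rcases eq_or_ne x 0 with rfl | hx0
  · simp
  rcases eq_or_ne y 0 with rfl | hy0
  · simp
  rcases eq_or_ne x ⊤ with rfl | hx
  · simp [hy0, ENNReal.mul_top]
  rcases eq_or_ne y ⊤ with rfl | hy
  · simp [hx0, ENNReal.mul_top]
  lift x to ℝ≥0 using hx
  lift y to ℝ≥0 using hy
  rw [← ENNReal.coe_two, ← ENNReal.coe_inv two_ne_zero]
  norm_cast
  rw [← NNReal.coe_le_coe]
  push_cast
  nlinarith [sq_nonneg ((x : ℝ) - y)]

lemma lintegral_ofReal_eq_mul_lintegral_div (q : ℝ → ℝ) {c : ℝ} (hc : 0 < c) :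
    ∫⁻ a, ENNReal.ofReal (q a) = ENNReal.ofReal c * ∫⁻ a, ENNReal.ofReal (q a / c) := by
  rw [← lintegral_const_mul' _ _ ENNReal.ofReal_ne_top]
  congr 1 with a
  rw [← ENNReal.ofReal_mul hc.le, mul_div_cancel₀ _ hc.ne']

lemma gaussianPDFReal_mul_le_sq_midpoint (m : ℝ) (v : ℝ≥0) (a b : ℝ) :
    gaussianPDFReal m v a * gaussianPDFReal m v b ≤ gaussianPDFReal m v (midpoint ℝ a b) ^ 2 := by
  simp only [gaussianPDFReal, Real.midpoint_eq_add_div_two]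
  set c := (√(2 * Real.pi * v))⁻¹
  have hexp : Real.exp (-(a - m) ^ 2 / (2 * v)) * Real.exp (-(b - m) ^ 2 / (2 * v)) ≤
      Real.exp (-((a + b) / 2 - m) ^ 2 / (2 * v)) ^ 2 := by
    rw [← Real.exp_add, ← Real.exp_nat_mul, Real.exp_le_exp, ← add_div, Nat.cast_ofNat,
      mul_div_assoc']
    exact div_le_div_of_nonneg_right (by nlinarith [sq_nonneg (a - b)]) (by positivity)
  calc _ = c ^ 2 * (Real.exp (-(a - m) ^ 2 / (2 * v)) * Real.exp (-(b - m) ^ 2 / (2 * v))) := by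
        ring
    _ ≤ c ^ 2 * Real.exp (-((a + b) / 2 - m) ^ 2 / (2 * v)) ^ 2 := by gcongr
    _ = _ := by ring

lemma gaussianPDFReal_le (m : ℝ) (v : ℝ≥0) (x : ℝ) :
    gaussianPDFReal m v x ≤ (√(2 * Real.pi * v))⁻¹ :=
  mul_le_of_le_one_right (by positivity) <| Real.exp_le_one_iff.2 <|
    div_nonpos_of_nonpos_of_nonneg (neg_nonpos.2 (sq_nonneg _)) (by positivity)

namespace MeasureTheory.Measure

theorem IsNegInvariant.map {G H : Type*} [MeasurableSpace G] [MeasurableSpace H] [Neg G] [Neg H]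
    [MeasurableNeg G] [MeasurableNeg H] {μ : Measure G} [μ.IsNegInvariant] {f : G → H}
    (hf : Measurable f) (hf_neg : ∀ a, f (-a) = -f a) : (μ.map f).IsNegInvariant := by
  refine ⟨?_⟩
  have : Neg.neg ∘ f = f ∘ Neg.neg := funext fun a => (hf_neg a).symm
  rw [Measure.neg, map_map measurable_neg hf, this, ← map_map hf measurable_neg, map_neg_eq_self]

variable {V W : Type*} [AddCommGroup V] [Module ℝ V] [MeasurableSpace V]
  [AddCommGroup W] [Module ℝ W] [MeasurableSpace W]

def HasMidpointPrekopaLeindler (μ : Measure V) : Prop :=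
  ∀ ⦃f g h : V → ℝ⦄, Measurable f → Measurable g → Measurable h → 0 ≤ f → 0 ≤ g → 0 ≤ h →
    BddAbove (range f) → BddAbove (range g) → (∀ a b, f a * g b ≤ h (midpoint ℝ a b) ^ 2) →
    (∫⁻ a, ENNReal.ofReal (f a) ∂μ) * (∫⁻ b, ENNReal.ofReal (g b) ∂μ) ≤
      (∫⁻ c, ENNReal.ofReal (h c) ∂μ) ^ 2

def IsMidpointLogConcave (μ : Measure V) : Prop :=
  ∀ ⦃A B S : Set V⦄, MeasurableSet A → MeasurableSet B → MeasurableSet S →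
    (∀ a ∈ A, ∀ b ∈ B, midpoint ℝ a b ∈ S) → μ A * μ B ≤ μ S ^ 2

theorem _root_.Real.hasMidpointPrekopaLeindler_volume :
    (volume : Measure ℝ).HasMidpointPrekopaLeindler := by
  intro f g h hf hg hh hf0 hg0 hh0 hf_bdd hg_bdd hfgh
  set M := ⨆ a, f a
  set N := ⨆ b, g b
  have hfM : ∀ a, f a ≤ M := le_ciSup hf_bdd
  have hgN : ∀ b, g b ≤ N := le_ciSup hg_bdd
  rcases le_or_gt M 0 with hM | hM
  · have : ∀ a, ENNReal.ofReal (f a) = 0 := fun a => ENNReal.ofReal_eq_zero.2 ((hfM a).trans hM)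
    simp [this]
  rcases le_or_gt N 0 with hN | hN
  · have : ∀ b, ENNReal.ofReal (g b) = 0 := fun b => ENNReal.ofReal_eq_zero.2 ((hgN b).trans hN)
    simp [this]
  -- rescale `f`, `g` to supremum `1`, and `h` by the geometric mean of the two suprema
  set c := √(M * N)
  have hc : 0 < c := Real.sqrt_pos.2 (mul_pos hM hN)
  have hc2 : c ^ 2 = M * N := Real.sq_sqrt (mul_pos hM hN).le
  have sup_div {q : ℝ → ℝ} {K : ℝ} (hK : 0 < K) (hqK : ⨆ a, q a = K) (t : ℝ) (ht : t < 1) :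
      ∃ a, t < q a / K := by
    obtain ⟨a, ha⟩ := exists_lt_of_lt_ciSup (hqK ▸ (mul_lt_iff_lt_one_left hK).2 ht :
      t * K < ⨆ a, q a)
    exact ⟨a, (lt_div_iff₀ hK).2 ha⟩
  have key := add_lintegral_le_lintegral_of_midpoint (hf.div_const M) (hg.div_const N)
    (hh.div_const c) (fun a => div_nonneg (hf0 a) hM.le) (fun b => div_nonneg (hg0 b) hN.le)
    (fun a => div_nonneg (hh0 a) hc.le) (fun a => div_le_one_of_le₀ (hfM a) hM.le)
    (fun b => div_le_one_of_le₀ (hgN b) hN.le) (sup_div hM rfl) (sup_div hN rfl)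
    fun a b => by
      rw [div_pow, hc2, div_mul_div_comm]
      exact div_le_div_of_nonneg_right (hfgh a b) (mul_pos hM hN).le
  rw [lintegral_ofReal_eq_mul_lintegral_div f hM, lintegral_ofReal_eq_mul_lintegral_div g hN,
    lintegral_ofReal_eq_mul_lintegral_div h hc]
  calc _ = ENNReal.ofReal (c ^ 2) * ((∫⁻ a, ENNReal.ofReal (f a / M)) *
        ∫⁻ b, ENNReal.ofReal (g b / N)) := by
        rw [hc2, ENNReal.ofReal_mul hM.le]; ring
    _ ≤ ENNReal.ofReal (c ^ 2) * (∫⁻ c', ENNReal.ofReal (h c' / c)) ^ 2 := by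
        gcongr
        exact (ENNReal.mul_le_sq_half_add _ _).trans (by gcongr)
    _ = _ := by rw [ENNReal.ofReal_pow hc.le]; ring

theorem HasMidpointPrekopaLeindler.withDensity {μ : Measure V}
    (hμ : μ.HasMidpointPrekopaLeindler) {ρ : V → ℝ} (hρ : Measurable ρ) (hρ0 : 0 ≤ ρ)
    (hρ_bdd : BddAbove (range ρ)) (hρ_mid : ∀ a b, ρ a * ρ b ≤ ρ (midpoint ℝ a b) ^ 2) :
    (μ.withDensity fun a => ENNReal.ofReal (ρ a)).HasMidpointPrekopaLeindler := by
  intro f g h hf hg hh hf0 hg0 hh0 hf_bdd hg_bdd hfgh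
  have hdens : ∀ {q : V → ℝ}, Measurable q → ∫⁻ a, ENNReal.ofReal (q a)
      ∂μ.withDensity (fun a => ENNReal.ofReal (ρ a)) = ∫⁻ a, ENNReal.ofReal (q a * ρ a) ∂μ :=
    fun {q} hq => by
      rw [lintegral_withDensity_eq_lintegral_mul _ hρ.ennreal_ofReal hq.ennreal_ofReal]
      congr 1 with a
      rw [Pi.mul_apply, ← ENNReal.ofReal_mul (hρ0 a), mul_comm]
  have hbdd : ∀ {q : V → ℝ}, 0 ≤ q → BddAbove (range q) → BddAbove (range fun a => q a * ρ a) :=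
    fun {q} hq0 ⟨M, hM⟩ => by
      obtain ⟨R, hR⟩ := hρ_bdd
      exact ⟨M * R, forall_mem_range.2 fun a =>
        mul_le_mul (hM ⟨a, rfl⟩) (hR ⟨a, rfl⟩) (hρ0 a) ((hq0 a).trans (hM ⟨a, rfl⟩))⟩
  rw [hdens hf, hdens hg, hdens hh]
  refine hμ (hf.mul hρ) (hg.mul hρ) (hh.mul hρ) (fun a => mul_nonneg (hf0 a) (hρ0 a))
    (fun a => mul_nonneg (hg0 a) (hρ0 a)) (fun a => mul_nonneg (hh0 a) (hρ0 a)) (hbdd hf0 hf_bdd)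
    (hbdd hg0 hg_bdd) fun a b => ?_
  calc f a * ρ a * (g b * ρ b) = (f a * g b) * (ρ a * ρ b) := by ring
    _ ≤ h (midpoint ℝ a b) ^ 2 * ρ (midpoint ℝ a b) ^ 2 :=
        mul_le_mul (hfgh a b) (hρ_mid a b) (mul_nonneg (hρ0 a) (hρ0 b)) (sq_nonneg _)
    _ = (h (midpoint ℝ a b) * ρ (midpoint ℝ a b)) ^ 2 := by ring

theorem isMidpointLogConcave_dirac (x : V) : (dirac x).IsMidpointLogConcave := by
  intro A B S hA hB hS hABS
  rw [dirac_apply' _ hA, dirac_apply' _ hB, dirac_apply' _ hS]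
  by_cases hxA : x ∈ A
  · by_cases hxB : x ∈ B
    · have hxS : x ∈ S := midpoint_self ℝ x ▸ hABS x hxA x hxB
      simp [hxA, hxB, hxS]
    · simp [hxB]
  · simp [hxA]

theorem IsMidpointLogConcave.map {μ : Measure V} (hμ : μ.IsMidpointLogConcave) {f : V → W}
    (hf : Measurable f) (hf_mid : ∀ a b, f (midpoint ℝ a b) = midpoint ℝ (f a) (f b)) :
    (μ.map f).IsMidpointLogConcave := by
  intro A B S hA hB hS hABS
  rw [map_apply hf hA, map_apply hf hB, map_apply hf hS]
  exact hμ (hf hA) (hf hB) (hf hS) fun a ha b hb => by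
    simpa only [mem_preimage, hf_mid] using hABS _ ha _ hb

theorem HasMidpointPrekopaLeindler.isMidpointLogConcave_prod {μ : Measure V} {ν : Measure W}
    [IsFiniteMeasure ν] (hμ : μ.HasMidpointPrekopaLeindler) (hν : ν.IsMidpointLogConcave) :
    (μ.prod ν).IsMidpointLogConcave := by
  intro A B S hA hB hS hABS
  have hslice : ∀ s : Set (V × W), ∫⁻ a, ν (Prod.mk a ⁻¹' s) ∂μ =
      ∫⁻ a, ENNReal.ofReal (ν (Prod.mk a ⁻¹' s)).toReal ∂μ :=
    fun s => lintegral_congr fun a => (ENNReal.ofReal_toReal (measure_ne_top _ _)).symm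
  have hbdd : ∀ s : Set (V × W), BddAbove (range fun a => (ν (Prod.mk a ⁻¹' s)).toReal) :=
    fun s => ⟨(ν univ).toReal, forall_mem_range.2 fun a =>
      ENNReal.toReal_mono (measure_ne_top _ _) (measure_mono (subset_univ _))⟩
  rw [prod_apply hA, prod_apply hB, prod_apply hS, hslice, hslice, hslice]
  refine hμ (measurable_measure_prodMk_left hA).ennreal_toReal
    (measurable_measure_prodMk_left hB).ennreal_toReal
    (measurable_measure_prodMk_left hS).ennreal_toReal (fun _ => ENNReal.toReal_nonneg)
    (fun _ => ENNReal.toReal_nonneg) (fun _ => ENNReal.toReal_nonneg) (hbdd A) (hbdd B)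
    fun a b => ?_
  rw [← ENNReal.toReal_mul, ← ENNReal.toReal_pow]
  exact ENNReal.toReal_mono (ENNReal.pow_ne_top (measure_ne_top _ _))
    (hν (measurable_prodMk_left hA) (measurable_prodMk_left hB) (measurable_prodMk_left hS)
      fun y hy z hz => hABS _ hy _ hz)

theorem HasMidpointPrekopaLeindler.isMidpointLogConcave_pi {μ : Measure ℝ} [IsFiniteMeasure μ]
    (hμ : μ.HasMidpointPrekopaLeindler) :
    ∀ n, (Measure.pi fun _ : Fin n => μ).IsMidpointLogConcave
  | 0 => by
    rw [pi_of_empty]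
    exact isMidpointLogConcave_dirac _
  | n + 1 => by
    let e := MeasurableEquiv.piFinSuccAbove (fun _ : Fin (n + 1) => ℝ) 0
    have he : ∀ p, e.symm p = Fin.cons p.1 p.2 := fun p => by
      simp [e, MeasurableEquiv.piFinSuccAbove_symm_apply, Fin.insertNthEquiv, Fin.insertNth_zero']
    rw [← ((measurePreserving_piFinSuccAbove (fun _ => μ) 0).symm e).map_eq]
    refine (hμ.isMidpointLogConcave_prod (hμ.isMidpointLogConcave_pi n)).map e.symm.measurable
      fun p q => ?_
    rw [he, he, he]
    ext i
    exact Fin.cases rfl (fun _ => rfl) i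

theorem IsMidpointLogConcave.measure_preimage_add_le [MeasurableAdd V] [MeasurableNeg V]
    {μ : Measure V} [μ.IsNegInvariant] (hμ : μ.IsMidpointLogConcave) {C : Set V}
    (hC : MeasurableSet C) (hconv : Convex ℝ C) (hsymm : -C = C) (v : V) :
    μ ((· + v) ⁻¹' C) ≤ μ C := by
  have hA : MeasurableSet ((· + v) ⁻¹' C) := measurable_add_const v hC
  -- `C - v` is the reflection of `C + v`, and the midpoints of the two lie in `C`
  have hB : (· - v) ⁻¹' C = Neg.neg ⁻¹' ((· + v) ⁻¹' C) := by
    ext t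
    simp only [mem_preimage]
    conv_lhs => rw [← hsymm, Set.mem_neg, neg_sub]
    rw [neg_add_eq_sub]
  have key := hμ hA (hB ▸ measurable_neg hA) hC fun a ha b hb => by
    have hmid : midpoint ℝ (a + v) (b - v) = midpoint ℝ a b := by
      rw [midpoint_eq_smul_add, midpoint_eq_smul_add, add_add_sub_cancel]
    exact hmid ▸ hconv.midpoint_mem ha hb
  rwa [hB, measure_preimage_neg, ← sq, ENNReal.pow_le_pow_left_iff two_ne_zero] at key

end MeasureTheory.Measure

theorem hasMidpointPrekopaLeindler_gaussianReal (m : ℝ) {v : ℝ≥0} (hv : v ≠ 0) :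
    (gaussianReal m v).HasMidpointPrekopaLeindler := by
  rw [gaussianReal_of_var_ne_zero m hv]
  exact Real.hasMidpointPrekopaLeindler_volume.withDensity (measurable_gaussianPDFReal m v)
    (gaussianPDFReal_nonneg m v) ⟨_, forall_mem_range.2 (gaussianPDFReal_le m v)⟩
    (gaussianPDFReal_mul_le_sq_midpoint m v)

instance isNegInvariant_gaussianReal (v : ℝ≥0) : (gaussianReal 0 v).IsNegInvariant :=
  ⟨(gaussianReal_map_neg (μ := 0) (v := v)).trans (by rw [neg_zero])⟩

section PartialSums

variable {E : Type*} [NormedAddCommGroup E] [NormedSpace ℝ E] [MeasurableSpace E] [BorelSpace E]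

open Measure

theorem measure_pi_sum_smul_mem_succ_le {μ : Measure ℝ} [IsProbabilityMeasure μ]
    [μ.IsNegInvariant] (hμ : μ.HasMidpointPrekopaLeindler) (x : ℕ → E) {K : Set E}
    (hK : IsClosed K) (hconv : Convex ℝ K) (hsymm : -K = K) (m : ℕ) :
    Measure.pi (fun _ : Fin (m + 1) => μ) {t | ∑ i, t i • x i ∈ K} ≤
      Measure.pi (fun _ : Fin m => μ) {t | ∑ i, t i • x i ∈ K} := by
  let T : (Fin m → ℝ) →ₗ[ℝ] E := Fintype.linearCombination ℝ fun i : Fin m => x i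
  have hT : Measurable T := T.continuous_of_finiteDimensional.measurable
  let e := MeasurableEquiv.piFinSuccAbove (fun _ : Fin (m + 1) => ℝ) (Fin.last m)
  have he : ∀ p, e.symm p = Fin.snoc p.2 p.1 := fun p => by
    simp [e, MeasurableEquiv.piFinSuccAbove_symm_apply, Fin.insertNthEquiv, Fin.insertNth_last']
  have hS : MeasurableSet {t : Fin (m + 1) → ℝ | ∑ i, t i • x i ∈ K} :=
    hK.measurableSet.preimage (Continuous.measurable (by fun_prop))
  have hslice : ∀ r : ℝ, Prod.mk r ⁻¹' (e.symm ⁻¹' {t | ∑ i, t i • x i ∈ K}) =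
      T ⁻¹' ((· + r • x m) ⁻¹' K) := fun r => by
    ext w
    simp [he, Fin.sum_univ_castSucc, T, Fintype.linearCombination_apply]
  have hν : ((Measure.pi fun _ : Fin m => μ).map T).IsMidpointLogConcave :=
    (hμ.isMidpointLogConcave_pi m).map hT fun a b => T.toAffineMap.map_midpoint a b
  have : ((Measure.pi fun _ : Fin m => μ).map T).IsNegInvariant :=
    IsNegInvariant.map hT (map_neg T)
  rw [← ((measurePreserving_piFinSuccAbove (fun _ => μ) (Fin.last m)).symm e).map_eq,
    map_apply e.symm.measurable hS, prod_apply (e.symm.measurable hS)]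
  calc ∫⁻ r, Measure.pi (fun _ : Fin m => μ) (Prod.mk r ⁻¹' (e.symm ⁻¹' _)) ∂μ
      ≤ ∫⁻ _, Measure.pi (fun _ : Fin m => μ) (T ⁻¹' K) ∂μ := lintegral_mono fun r => by
        rw [hslice, ← map_apply hT (measurable_add_const _ hK.measurableSet),
          ← map_apply hT hK.measurableSet]
        exact hν.measure_preimage_add_le hK.measurableSet hconv hsymm _
    _ = _ := by
      rw [lintegral_const, measure_univ, mul_one]
      rfl

theorem measurable_sum_smul {Ω : Type*} [MeasurableSpace Ω] {ξ : ℕ → Ω → ℝ}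
    (hmeas : ∀ i, Measurable (ξ i)) (x : ℕ → E) (n : ℕ) :
    Measurable fun ω => ∑ i ∈ Finset.range n, ξ i ω • x i := by
  have hT : Continuous fun t : Fin n → ℝ => ∑ i, t i • x i := by fun_prop
  convert hT.measurable.comp (measurable_pi_lambda (fun ω (i : Fin n) => ξ i ω) fun i => hmeas i)
    with ω
  exact (Fin.sum_univ_eq_sum_range (fun i => ξ i ω • x i) n).symm

theorem measure_sum_smul_mem_eq_pi {Ω : Type*} [MeasurableSpace Ω] {P : Measure Ω}
    {ξ : ℕ → Ω → ℝ} (hmeas : ∀ i, Measurable (ξ i)) (hindep : iIndepFun ξ P) {μ : Measure ℝ}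
    (hlaw : ∀ i, P.map (ξ i) = μ) (x : ℕ → E) {K : Set E} (hK : MeasurableSet K) (n : ℕ) :
    P {ω | ∑ i ∈ Finset.range n, ξ i ω • x i ∈ K} =
      Measure.pi (fun _ : Fin n => μ) {t | ∑ i, t i • x i ∈ K} := by
  have hξ : Measurable fun ω (i : Fin n) => ξ i ω := measurable_pi_lambda _ fun i => hmeas i
  have hlaw_pi : P.map (fun ω (i : Fin n) => ξ i ω) = Measure.pi fun _ => μ := by
    rw [(hindep.precomp Fin.val_injective).map_fun_eq_pi_map (f := fun i : Fin n => ξ i)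
      fun i => (hmeas i).aemeasurable]
    simp only [hlaw]
  have hT : MeasurableSet {t : Fin n → ℝ | ∑ i, t i • x i ∈ K} :=
    hK.preimage (Continuous.measurable (by fun_prop))
  rw [← hlaw_pi, map_apply hξ hT]
  congr 1 with ω
  simp [Fin.sum_univ_eq_sum_range fun i => ξ i ω • x i]

theorem antitone_measure_sum_smul_mem {Ω : Type*} [MeasurableSpace Ω] {P : Measure Ω}
    {ξ : ℕ → Ω → ℝ} (hmeas : ∀ i, Measurable (ξ i)) (hindep : iIndepFun ξ P) {μ : Measure ℝ}
    [IsProbabilityMeasure μ] [μ.IsNegInvariant] (hμ : μ.HasMidpointPrekopaLeindler)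
    (hlaw : ∀ i, P.map (ξ i) = μ) (x : ℕ → E) {K : Set E} (hK : IsClosed K)
    (hconv : Convex ℝ K) (hsymm : -K = K) :
    Antitone fun n => P {ω | ∑ i ∈ Finset.range n, ξ i ω • x i ∈ K} := by
  refine antitone_nat_of_succ_le fun m => ?_
  simp only [measure_sum_smul_mem_eq_pi hmeas hindep hlaw x hK.measurableSet]
  exact measure_pi_sum_smul_mem_succ_le hμ x hK hconv hsymm m

end PartialSums

section Convergence

variable {Ω : Type*} [MeasurableSpace Ω] {P : Measure Ω}

theorem measure_liminf_le_liminf_measure (s : ℕ → Set Ω) :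
    P (liminf s atTop) ≤ liminf (fun n => P (s n)) atTop := by
  rw [liminf_eq_iSup_iInf_of_nat, liminf_eq_iSup_iInf_of_nat]
  simp only [iSup_eq_iUnion, iInf_eq_iInter]
  have hmono : Monotone fun n => ⋂ i, ⋂ (_ : i ≥ n), s i :=
    fun m n hmn => iInter₂_mono' fun i hi => ⟨i, hmn.trans hi, le_rfl⟩
  rw [hmono.measure_iUnion]
  exact iSup_mono fun n => le_iInf₂ fun i hi => measure_mono (biInter_subset_of_mem hi)

theorem limsup_measure_le_measure_limsup [IsFiniteMeasure P] {s : ℕ → Set Ω}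
    (hs : ∀ n, MeasurableSet (s n)) :
    limsup (fun n => P (s n)) atTop ≤ P (limsup s atTop) := by
  rw [limsup_eq_iInf_iSup_of_nat, limsup_eq_iInf_iSup_of_nat]
  simp only [iSup_eq_iUnion, iInf_eq_iInter]
  have hanti : Antitone fun n => ⋃ i, ⋃ (_ : i ≥ n), s i :=
    fun m n hmn => iUnion₂_mono' fun i hi => ⟨i, hmn.trans hi, le_rfl⟩
  rw [hanti.measure_iInter
    (fun n => (MeasurableSet.biUnion (to_countable _) fun i _ => hs i).nullMeasurableSet)
    ⟨0, measure_ne_top _ _⟩]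
  exact iInf_mono fun n => iSup₂_le fun i hi => measure_mono (subset_biUnion_of_mem hi)

variable {E : Type*} [PseudoMetricSpace E] [MeasurableSpace E] [OpensMeasurableSpace E]
  {Y : ℕ → Ω → E} {Z : Ω → E} {F : Set E}

theorem limsup_measure_mem_le_of_ae_tendsto [IsFiniteMeasure P] (hY : ∀ n, Measurable (Y n))
    (hYZ : ∀ᵐ ω ∂P, Tendsto (fun n => Y n ω) atTop (𝓝 (Z ω))) (hF : IsClosed F) :
    limsup (fun n => P {ω | Y n ω ∈ F}) atTop ≤ P {ω | Z ω ∈ F} := by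
  refine (limsup_measure_le_measure_limsup fun n => hY n hF.measurableSet).trans
    (measure_mono_ae ?_)
  filter_upwards [hYZ] with ω hω hfreq
  exact hF.mem_of_frequently_of_tendsto
    (mem_limsup_iff_frequently_mem.1 hfreq : ∃ᶠ n in atTop, Y n ω ∈ F) hω

theorem measure_mem_le_of_ae_tendsto_of_antitone [IsFiniteMeasure P] (hY : ∀ n, Measurable (Y n))
    (hYZ : ∀ᵐ ω ∂P, Tendsto (fun n => Y n ω) atTop (𝓝 (Z ω))) (hF : IsClosed F)
    (hanti : ∀ ε > 0, Antitone fun n => P {ω | Y n ω ∈ Metric.cthickening ε F}) (n : ℕ) :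
    P {ω | Z ω ∈ F} ≤ P {ω | Y n ω ∈ F} := by
  have hε : ∀ ε > 0, P {ω | Z ω ∈ F} ≤ P {ω | Y n ω ∈ Metric.cthickening ε F} := by
    intro ε hε
    calc P {ω | Z ω ∈ F}
        ≤ P (liminf (fun m => {ω | Y m ω ∈ Metric.cthickening ε F}) atTop) := by
          refine measure_mono_ae ?_
          filter_upwards [hYZ] with ω hω hZ
          exact mem_liminf_iff_eventually_mem.2 ((hω.eventually_mem
            (Metric.closedBall_mem_nhds _ hε)).mono fun m hm =>
              Metric.mem_cthickening_of_dist_le _ _ _ _ hZ (Metric.mem_closedBall.1 hm))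
      _ ≤ liminf (fun m => P {ω | Y m ω ∈ Metric.cthickening ε F}) atTop :=
          measure_liminf_le_liminf_measure _
      _ ≤ P {ω | Y n ω ∈ Metric.cthickening ε F} :=
          liminf_le_of_frequently_le'
            ((eventually_ge_atTop n).mono fun m hm => hanti ε hε hm).frequently
  have hlim := tendsto_measure_cthickening_of_isClosed (μ := P.map (Y n))
    ⟨1, one_pos, measure_ne_top _ _⟩ hF
  simp only [Measure.map_apply (hY n) Metric.isClosed_cthickening.measurableSet,
    Measure.map_apply (hY n) hF.measurableSet] at hlim
  exact ge_of_tendsto (hlim.mono_left nhdsWithin_le_nhds)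
    (eventually_nhdsWithin_of_forall (s := Ioi 0) hε)

end Convergence

theorem stmt3_general {E : Type*} [NormedAddCommGroup E] [NormedSpace ℝ E]
    [MeasurableSpace E] [BorelSpace E]
    {Ω : Type*} [MeasurableSpace Ω] (P : Measure Ω) [IsProbabilityMeasure P]
    (ξ : ℕ → Ω → ℝ) (hmeas : ∀ i, Measurable (ξ i))
    (hindep : iIndepFun ξ P)
    (hgauss : ∀ i, P.map (ξ i) = gaussianReal 0 1)
    (x : ℕ → E) (X : Ω → E)
    (hKL : ∀ᵐ ω ∂P, Tendsto (fun n => ∑ i ∈ Finset.range n, ξ i ω • x i)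
      atTop (nhds (X ω)))
    (K : Set E) (hKc : IsClosed K) (hKconv : Convex ℝ K) (hKsym : K = -K) :
    Tendsto (fun n => P {ω | ∑ i ∈ Finset.range n, ξ i ω • x i ∈ K})
      atTop (nhds (P {ω | X ω ∈ K})) := by
  have hS := measurable_sum_smul hmeas x
  have hanti : ∀ ε > 0,
      Antitone fun n => P {ω | ∑ i ∈ Finset.range n, ξ i ω • x i ∈ Metric.cthickening ε K} :=
    fun ε _ => antitone_measure_sum_smul_mem hmeas hindep
      (hasMidpointPrekopaLeindler_gaussianReal 0 one_ne_zero) hgauss x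
      Metric.isClosed_cthickening (hKconv.cthickening ε) (by rw [neg_cthickening, ← hKsym])
  exact tendsto_of_le_liminf_of_limsup_le
    (le_liminf_of_le (by isBoundedDefault) (Eventually.of_forall
      (measure_mem_le_of_ae_tendsto_of_antitone hS hKL hKc hanti)))
    (limsup_measure_mem_le_of_ae_tendsto hS hKL hKc)

/-- for a centred Gaussian random element `X` in a separable Banach space
with Karhunen–Loève expansion `X = ∑ ξ_i x_i` (a.s. convergence in norm, `ξ_i` i.i.d.
standard normal), and a closed, convex, symmetric set `K`,
`P(X ∈ K) = lim_n P(∑_{i<n} ξ_i x_i ∈ K)`. -/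
theorem stmt3 {E : Type*} [NormedAddCommGroup E] [NormedSpace ℝ E]
    [TopologicalSpace.SeparableSpace E] [MeasurableSpace E] [BorelSpace E]
    {Ω : Type*} [MeasurableSpace Ω] (P : Measure Ω) [IsProbabilityMeasure P]
    (ξ : ℕ → Ω → ℝ) (hmeas : ∀ i, Measurable (ξ i))
    (hindep : iIndepFun ξ P)
    (hgauss : ∀ i, P.map (ξ i) = gaussianReal 0 1)
    (x : ℕ → E) (X : Ω → E) (hX : Measurable X)
    (hKL : ∀ᵐ ω ∂P, Tendsto (fun n => ∑ i ∈ Finset.range n, ξ i ω • x i)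
      atTop (nhds (X ω)))
    (K : Set E) (hKc : IsClosed K) (hKconv : Convex ℝ K) (hKsym : K = -K) :
    Tendsto (fun n => P {ω | ∑ i ∈ Finset.range n, ξ i ω • x i ∈ K})
      atTop (nhds (P {ω | X ω ∈ K})) :=
  stmt3_general P ξ hmeas hindep hgauss x X hKL K hKc hKconv hKsym
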